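/- Let n' := ½(m₁ + m₃) and τ' := convexHull{m₂, n', ½u, −½v}. Then −½w + τ' ⊆ u + V. -/
import Mathlib


/-!
STATEMENT 17: For the hexagonal Voronoi cell `V` of `𝖯 = ℤu + ℤv` (strictly obtuse
superbasis `u, v, w = −u−v`), with `n' := ½(m₁ + m₃)` and
`τ' := convexHull{m₂, n', ½u, −½v}`, one has `−½w + τ' ⊆ u + V`.
-/

noncomputable section

/-- The standard inner product on `ℝ × ℝ`. -/
def ip (x y : ℝ × ℝ) : ℝ := x.1 * y.1 + x.2 * y.2

/-- The lattice `ℤu + ℤv` as a subset of `ℝ × ℝ`. -/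
def lat (u v : ℝ × ℝ) : Set (ℝ × ℝ) :=
  {p | ∃ m n : ℤ, p = (m : ℝ) • u + (n : ℝ) • v}

/-- The Voronoi cell of the lattice `ℤu + ℤv` around the origin. -/
def vorCell (u v : ℝ × ℝ) : Set (ℝ × ℝ) :=
  {y | ∀ p ∈ lat u v, ip y y ≤ ip (y - p) (y - p)}

lemma ip_add_left (x y z : ℝ × ℝ) : ip (x + y) z = ip x z + ip y z := by
  simp [ip, Prod.fst_add, Prod.snd_add]; ring

lemma ip_sub_left (x y z : ℝ × ℝ) : ip (x - y) z = ip x z - ip y z := by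
  simp [ip, Prod.fst_sub, Prod.snd_sub]; ring

lemma ip_neg_left (x z : ℝ × ℝ) : ip (-x) z = -(ip x z) := by
  simp [ip]; ring

lemma ip_smul_left (c : ℝ) (x z : ℝ × ℝ) : ip (c • x) z = c * ip x z := by
  simp [ip, Prod.smul_fst, Prod.smul_snd, smul_eq_mul]; ring

lemma ip_sub_right (x y z : ℝ × ℝ) : ip x (y - z) = ip x y - ip x z := by
  simp [ip, Prod.fst_sub, Prod.snd_sub]; ring

lemma ip_neg_right (x z : ℝ × ℝ) : ip x (-z) = -(ip x z) := by
  simp [ip]; ring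

lemma ip_expand (z p : ℝ × ℝ) :
    ip (z - p) (z - p) = ip z z - 2 * ip z p + ip p p := by
  simp only [ip, Prod.fst_sub, Prod.snd_sub]; ring

lemma vorCell_convex (u v : ℝ × ℝ) : Convex ℝ (vorCell u v) := by
  intro z₁ h₁ z₂ h₂ θ σ hθ hσ hsum
  intro p hp
  have g₁ := h₁ p hp
  have g₂ := h₂ p hp
  rw [ip_expand] at g₁ g₂ ⊢
  have e : ip (θ • z₁ + σ • z₂) p = θ * ip z₁ p + σ * ip z₂ p := by
    rw [ip_add_left, ip_smul_left, ip_smul_left]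
  have k₁ : θ * (2 * ip z₁ p) ≤ θ * ip p p :=
    mul_le_mul_of_nonneg_left (by linarith) hθ
  have k₂ : σ * (2 * ip z₂ p) ≤ σ * ip p p :=
    mul_le_mul_of_nonneg_left (by linarith) hσ
  have hpp : θ * ip p p + σ * ip p p = ip p p := by
    rw [← add_mul, hsum, one_mul]
  nlinarith [e, k₁, k₂, hpp]

lemma key (a b c α β M N : ℝ)
    (ha : 0 ≤ a) (hb : 0 ≤ b) (hc : 0 ≤ c)
    (h1 : 2*α ≤ a+b) (h2 : -(a+b) ≤ 2*α)
    (h3 : 2*β ≤ a+c) (h4 : -(a+c) ≤ 2*β)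
    (h5 : 2*(α+β) ≤ b+c) (h6 : -(b+c) ≤ 2*(α+β))
    (hM1 : M ≤ M^2) (hM2 : -M ≤ M^2)
    (hN1 : N ≤ N^2) (hN2 : -N ≤ N^2)
    (hT1 : M-N ≤ (M-N)^2) (hT2 : -(M-N) ≤ (M-N)^2) :
    2*M*α + 2*N*β ≤ a*(M-N)^2 + b*M^2 + c*N^2 := by
  rcases le_total 0 M with hM0 | hM0 <;> rcases le_total 0 N with hN0 | hN0
  · rcases le_total 0 (M-N) with hT0 | hT0
    · nlinarith [mul_nonneg hT0 (by linarith : (0:ℝ) ≤ a+b-2*α),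
        mul_nonneg hN0 (by linarith : (0:ℝ) ≤ b+c-2*(α+β)),
        mul_nonneg ha (by linarith : (0:ℝ) ≤ (M-N)^2-(M-N)),
        mul_nonneg hb (by linarith : (0:ℝ) ≤ M^2-M),
        mul_nonneg hc (by linarith : (0:ℝ) ≤ N^2-N)]
    · nlinarith [mul_nonneg hM0 (by linarith : (0:ℝ) ≤ b+c-2*(α+β)),
        mul_nonneg (by linarith : (0:ℝ) ≤ N-M) (by linarith : (0:ℝ) ≤ a+c+2*β),
        mul_nonneg ha (by linarith : (0:ℝ) ≤ (M-N)^2+(M-N)),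
        mul_nonneg hb (by linarith : (0:ℝ) ≤ M^2-M),
        mul_nonneg hc (by linarith : (0:ℝ) ≤ N^2-N)]
  · nlinarith [mul_nonneg hM0 (by linarith : (0:ℝ) ≤ a+b-2*α),
      mul_nonneg (by linarith : (0:ℝ) ≤ -N) (by linarith : (0:ℝ) ≤ a+c+2*β),
      mul_nonneg ha (by linarith : (0:ℝ) ≤ (M-N)^2-(M-N)),
      mul_nonneg hb (by linarith : (0:ℝ) ≤ M^2-M),
      mul_nonneg hc (by linarith : (0:ℝ) ≤ N^2+N)]
  · nlinarith [mul_nonneg (by linarith : (0:ℝ) ≤ -M) (by linarith : (0:ℝ) ≤ a+b+2*α),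
      mul_nonneg hN0 (by linarith : (0:ℝ) ≤ a+c-2*β),
      mul_nonneg ha (by linarith : (0:ℝ) ≤ (M-N)^2+(M-N)),
      mul_nonneg hb (by linarith : (0:ℝ) ≤ M^2+M),
      mul_nonneg hc (by linarith : (0:ℝ) ≤ N^2-N)]
  · rcases le_total 0 (M-N) with hT0 | hT0
    · nlinarith [mul_nonneg (by linarith : (0:ℝ) ≤ -M) (by linarith : (0:ℝ) ≤ b+c+2*(α+β)),
        mul_nonneg hT0 (by linarith : (0:ℝ) ≤ a+c+2*β),
        mul_nonneg ha (by linarith : (0:ℝ) ≤ (M-N)^2-(M-N)),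
        mul_nonneg hb (by linarith : (0:ℝ) ≤ M^2+M),
        mul_nonneg hc (by linarith : (0:ℝ) ≤ N^2+N)]
    · nlinarith [mul_nonneg (by linarith : (0:ℝ) ≤ N-M) (by linarith : (0:ℝ) ≤ a+b+2*α),
        mul_nonneg (by linarith : (0:ℝ) ≤ -N) (by linarith : (0:ℝ) ≤ b+c+2*(α+β)),
        mul_nonneg ha (by linarith : (0:ℝ) ≤ (M-N)^2+(M-N)),
        mul_nonneg hb (by linarith : (0:ℝ) ≤ M^2+M),
        mul_nonneg hc (by linarith : (0:ℝ) ≤ N^2+N)]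

lemma int_le_sq (m : ℤ) : ((m:ℝ) ≤ (m:ℝ)^2) ∧ (-(m:ℝ) ≤ (m:ℝ)^2) := by
  have h : |(m:ℝ)| ≤ (m:ℝ)^2 := by
    rcases eq_or_ne m 0 with rfl | hm
    · simp
    · have h1 : (1:ℝ) ≤ |(m:ℝ)| := by
        have := Int.one_le_abs (by exact_mod_cast hm : m ≠ 0)
        calc (1:ℝ) ≤ (|m| : ℤ) := by exact_mod_cast this
          _ = |(m:ℝ)| := Int.cast_abs
      nlinarith [abs_nonneg (m:ℝ), sq_abs (m:ℝ)]
  exact ⟨le_trans (le_abs_self _) h, le_trans (neg_le_abs _) h⟩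

lemma mem_vorCell (u v z : ℝ × ℝ)
    (hS : ip u v < 0) (hB : 0 < ip u u + ip u v) (hC : 0 < ip v v + ip u v)
    (h1 : 2 * ip z u ≤ ip u u) (h2 : -(ip u u) ≤ 2 * ip z u)
    (h3 : 2 * ip z v ≤ ip v v) (h4 : -(ip v v) ≤ 2 * ip z v)
    (h5 : 2 * (ip z u + ip z v) ≤ ip u u + 2 * ip u v + ip v v)
    (h6 : -(ip u u + 2 * ip u v + ip v v) ≤ 2 * (ip z u + ip z v)) :
    z ∈ vorCell u v := by
  rintro p ⟨m, n, rfl⟩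
  rw [ip_expand]
  have e1 : ip z ((m:ℝ) • u + (n:ℝ) • v) = (m:ℝ) * ip z u + (n:ℝ) * ip z v := by
    simp only [ip, Prod.fst_add, Prod.snd_add, Prod.smul_fst, Prod.smul_snd, smul_eq_mul]
    ring
  have e2 : ip ((m:ℝ) • u + (n:ℝ) • v) ((m:ℝ) • u + (n:ℝ) • v)
      = (m:ℝ)^2 * ip u u + 2*(m:ℝ)*(n:ℝ) * ip u v + (n:ℝ)^2 * ip v v := by
    simp only [ip, Prod.fst_add, Prod.snd_add, Prod.smul_fst, Prod.smul_snd, smul_eq_mul]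
    ring
  have hk := key (-(ip u v)) (ip u u + ip u v) (ip v v + ip u v)
    (ip z u) (ip z v) (m:ℝ) (n:ℝ)
    (by linarith) (by linarith) (by linarith)
    (by linarith) (by linarith) (by linarith) (by linarith) (by linarith) (by linarith)
    (int_le_sq m).1 (int_le_sq m).2 (int_le_sq n).1 (int_le_sq n).2
    ((by exact_mod_cast (int_le_sq (m-n)).1 : ((m:ℝ)-(n:ℝ)) ≤ ((m:ℝ)-(n:ℝ))^2))
    ((by exact_mod_cast (int_le_sq (m-n)).2 : -((m:ℝ)-(n:ℝ)) ≤ ((m:ℝ)-(n:ℝ))^2))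
  nlinarith [hk, e1, e2]

theorem translate_of_tau_prime_in_translated_voronoi_cell
    (u v w : ℝ × ℝ) (hw : w = -u - v)
    (huv : ip u v < 0) (huw : ip u w < 0) (hvw : ip v w < 0)
    (m₁ m₂ m₃ : ℝ × ℝ)
    (hm₁ : ip m₁ w = ip w w / 2 ∧ ip m₁ v = -(ip v v / 2))
    (hm₂ : ip m₂ u = ip u u / 2 ∧ ip m₂ v = -(ip v v / 2))
    (hm₃ : ip m₃ u = ip u u / 2 ∧ ip m₃ w = -(ip w w / 2)) :
    ∀ x ∈ convexHull ℝ
        ({m₂, (1 / 2 : ℝ) • (m₁ + m₃), (1 / 2 : ℝ) • u, -((1 / 2 : ℝ) • v)} :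
          Set (ℝ × ℝ)),
      ∃ z ∈ vorCell u v, -((1 / 2 : ℝ) • w) + x = u + z := by
  have hvu : ip v u = ip u v := by simp [ip]; ring
  have hwu : ip w u = -(ip u u) - ip u v := by
    rw [hw, ip_sub_left, ip_neg_left, hvu]
  have hwv : ip w v = -(ip u v) - ip v v := by
    rw [hw, ip_sub_left, ip_neg_left]
  have hvw' : ip v w = -(ip u v) - ip v v := by
    have h : ip v w = ip w v := by simp [ip]; ring
    rw [h, hwv]
  have huw' : ip u w = -(ip u u) - ip u v := by
    have h : ip u w = ip w u := by simp [ip]; ring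
    rw [h, hwu]
  have hww : ip w w = ip u u + 2 * ip u v + ip v v := by
    rw [hw, ip_sub_left, ip_neg_left, ip_sub_right, ip_sub_right, ip_neg_right,
      ip_neg_right, hvu]
    ring
  have hB : 0 < ip u u + ip u v := by rw [huw'] at huw; linarith
  have hC : 0 < ip v v + ip u v := by rw [hvw'] at hvw; linarith
  have hm1w : ip m₁ w = (ip u u + 2 * ip u v + ip v v) / 2 := by rw [hm₁.1, hww]
  have hm3w : ip m₃ w = -((ip u u + 2 * ip u v + ip v v) / 2) := by rw [hm₃.2, hww]
  have hu' : u = -w - v := by rw [hw]; abel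
  have hm1u : ip m₁ u = -(ip m₁ w) - ip m₁ v := by
    rw [hu', ip_sub_right, ip_neg_right]
  have hm3v : ip m₃ v = -(ip m₃ u) - ip m₃ w := by
    have hv' : v = -u - w := by rw [hw]; abel
    rw [hv', ip_sub_right, ip_neg_right]
  set G : Set (ℝ × ℝ) :=
    {x | -((1 / 2 : ℝ) • w) + x - u ∈ vorCell u v} with hG
  have hGconv : Convex ℝ G := by
    intro x₁ h₁ x₂ h₂ θ σ hθ hσ hsum
    have hz : -((1 / 2 : ℝ) • w) + (θ • x₁ + σ • x₂) - u
        = θ • (-((1 / 2 : ℝ) • w) + x₁ - u) + σ • (-((1 / 2 : ℝ) • w) + x₂ - u) := by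
      match_scalars <;> linarith
    show _ ∈ vorCell u v
    rw [hz]
    exact vorCell_convex u v h₁ h₂ hθ hσ hsum
  have hδu : ip (-((1 / 2 : ℝ) • w)) u = (ip u u + ip u v) / 2 := by
    rw [ip_neg_left, ip_smul_left, hwu]; ring
  have hδv : ip (-((1 / 2 : ℝ) • w)) v = (ip u v + ip v v) / 2 := by
    rw [ip_neg_left, ip_smul_left, hwv]; ring
  have hvert : ({m₂, (1 / 2 : ℝ) • (m₁ + m₃), (1 / 2 : ℝ) • u, -((1 / 2 : ℝ) • v)} :
      Set (ℝ × ℝ)) ⊆ G := by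
    intro y hy
    simp only [Set.mem_insert_iff, Set.mem_singleton_iff] at hy
    rcases hy with hy | hy | hy | hy <;> rw [hy]
    · -- m₂
      have hA : ip (-((1 / 2 : ℝ) • w) + m₂ - u) u = ip u v / 2 := by
        rw [ip_sub_left, ip_add_left, hδu, hm₂.1]; ring
      have hBv : ip (-((1 / 2 : ℝ) • w) + m₂ - u) v = -(ip u v / 2) := by
        rw [ip_sub_left, ip_add_left, hδv, hm₂.2]; ring
      exact mem_vorCell u v _ huv hB hC (by rw [hA]; linarith) (by rw [hA]; linarith)
        (by rw [hBv]; linarith) (by rw [hBv]; linarith)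
        (by rw [hA, hBv]; linarith) (by rw [hA, hBv]; linarith)
    · -- n'
      have hA : ip (-((1 / 2 : ℝ) • w) + (1 / 2 : ℝ) • (m₁ + m₃) - u) u
          = -(ip u u / 2) := by
        rw [ip_sub_left, ip_add_left, hδu, ip_smul_left, ip_add_left, hm1u, hm1w,
          hm₁.2, hm₃.1]
        ring
      have hBv : ip (-((1 / 2 : ℝ) • w) + (1 / 2 : ℝ) • (m₁ + m₃) - u) v
          = ip v v / 2 := by
        rw [ip_sub_left, ip_add_left, hδv, ip_smul_left, ip_add_left, hm3v, hm3w,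
          hm₁.2, hm₃.1]
        ring
      exact mem_vorCell u v _ huv hB hC (by rw [hA]; linarith) (by rw [hA]; linarith)
        (by rw [hBv]; linarith) (by rw [hBv]; linarith)
        (by rw [hA, hBv]; linarith) (by rw [hA, hBv]; linarith)
    · -- ½u
      have hA : ip (-((1 / 2 : ℝ) • w) + (1 / 2 : ℝ) • u - u) u = ip u v / 2 := by
        rw [ip_sub_left, ip_add_left, hδu, ip_smul_left]; ring
      have hBv : ip (-((1 / 2 : ℝ) • w) + (1 / 2 : ℝ) • u - u) v = ip v v / 2 := by
        rw [ip_sub_left, ip_add_left, hδv, ip_smul_left]; ring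
      exact mem_vorCell u v _ huv hB hC (by rw [hA]; linarith) (by rw [hA]; linarith)
        (by rw [hBv]; linarith) (by rw [hBv]; linarith)
        (by rw [hA, hBv]; linarith) (by rw [hA, hBv]; linarith)
    · -- -½v
      have hA : ip (-((1 / 2 : ℝ) • w) + -((1 / 2 : ℝ) • v) - u) u
          = -(ip u u / 2) := by
        rw [ip_sub_left, ip_add_left, hδu, ip_neg_left, ip_smul_left, hvu]; ring
      have hBv : ip (-((1 / 2 : ℝ) • w) + -((1 / 2 : ℝ) • v) - u) v
          = -(ip u v / 2) := by
        rw [ip_sub_left, ip_add_left, hδv, ip_neg_left, ip_smul_left]; ring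
      exact mem_vorCell u v _ huv hB hC (by rw [hA]; linarith) (by rw [hA]; linarith)
        (by rw [hBv]; linarith) (by rw [hBv]; linarith)
        (by rw [hA, hBv]; linarith) (by rw [hA, hBv]; linarith)
  intro x hx
  have hxG : x ∈ G := convexHull_min hvert hGconv hx
  exact ⟨-((1 / 2 : ℝ) • w) + x - u, hxG, by abel⟩

end
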